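/- (Nonnegative linear combinations are univariate generalized Pareto.) Let Z = (Z_1,…,Z_D) be a standard MGP random vector, Z_j = E + S_j. Let σ ∈ (0,∞)^D, let ξ ∈ ℝ be a common shape parameter, and define Y_j = σ_j(exp(ξ Z_j) − 1)/ξ (interpreted as σ_j Z_j when ξ = 0). Let a ∈ [0,∞)^D with a ≠ 0 and set c = a_1 σ_1 + ⋯ + a_D σ_D > 0. Then P(a_1 Y_1 + ⋯ + a_D Y_D > 0) > 0, and for every x ≥ 0 with 1 + ξ x/c > 0: P( a_1 Y_1 + ⋯ + a_D Y_D > x | a_1 Y_1 + ⋯ + a_D Y_D > 0 ) = (1 + ξ x/c)^{−1/ξ} (interpreted as exp(−x/c) when ξ = 0). That is, conditionally on being positive, the linear combination is generalized Pareto with scale c = a·σ and shape ξ, independently of the dependence structure S. -/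

import Mathlib

/-!
With a common shape `ξ`, every `a_j Y_j` is `gpScale (a_j σ_j) ξ (E + S_j)`, and such terms sum to
`gpScale c ξ (E + V)`, where `V` is the mean of `S` with weights `a_j σ_j` for the generator
`exp (ξ ·)`. Since all `S_j ≤ 0`, also `V ≤ 0`. As `gpScale c ξ` is strictly increasing with
inverse `gpLog c ξ`, the event `x < a·Y` is `gpLog c ξ x < E + V`, and by memorylessness of `E`,
which is independent of `V`, `P(t < E + V) = exp (-t) P(0 < E + V)` for `t ≥ 0`. Finally
`exp (-gpLog c ξ x)` is the `GP(c, ξ)` survival function.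
-/

open MeasureTheory ProbabilityTheory

/-- The marginal transformation `z ↦ σ (exp (ξ z) − 1)/ξ`, interpreted as `σ z` when
`ξ = 0`. -/
noncomputable def gpScale (σ ξ z : ℝ) : ℝ :=
  if ξ = 0 then σ * z else σ * (Real.exp (ξ * z) - 1) / ξ

noncomputable def gpLog (c ξ x : ℝ) : ℝ :=
  if ξ = 0 then x / c else Real.log (1 + ξ * x / c) / ξ

/-- Quasi-arithmetic mean of `s` with weights `w` for the generator `exp (ξ ·)`. -/
noncomputable def gpMean {ι : Type*} [Fintype ι] (w : ι → ℝ) (ξ : ℝ) (s : ι → ℝ) : ℝ :=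
  if ξ = 0 then (∑ j, w j * s j) / ∑ j, w j
  else Real.log ((∑ j, w j * Real.exp (ξ * s j)) / ∑ j, w j) / ξ

@[simp]
lemma gpScale_zero_right (σ ξ : ℝ) : gpScale σ ξ 0 = 0 := by
  simp [gpScale]

lemma mul_gpScale (a σ ξ z : ℝ) : a * gpScale σ ξ z = gpScale (a * σ) ξ z := by
  unfold gpScale; split_ifs <;> ring

lemma strictMono_gpScale {σ : ℝ} (hσ : 0 < σ) (ξ : ℝ) : StrictMono (gpScale σ ξ) := by
  intro z₁ z₂ h
  unfold gpScale
  split_ifs with hξ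
  · exact mul_lt_mul_of_pos_left h hσ
  rw [mul_div_assoc, mul_div_assoc]
  refine mul_lt_mul_of_pos_left ?_ hσ
  rcases lt_or_gt_of_ne hξ with hneg | hpos
  · exact div_lt_div_of_neg_of_lt hneg (sub_lt_sub_right (Real.exp_lt_exp.2 (by nlinarith)) 1)
  · exact div_lt_div_of_pos_right (sub_lt_sub_right (Real.exp_lt_exp.2 (by nlinarith)) 1) hpos

lemma gpScale_nonpos {σ z : ℝ} (hσ : 0 ≤ σ) (ξ : ℝ) (hz : z ≤ 0) : gpScale σ ξ z ≤ 0 := by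
  rw [← mul_one σ, ← mul_gpScale]
  refine mul_nonpos_of_nonneg_of_nonpos hσ ?_
  simpa using (strictMono_gpScale one_pos ξ).monotone hz

lemma gpScale_gpLog {c ξ x : ℝ} (hc : 0 < c) (hx : 0 < 1 + ξ * x / c) :
    gpScale c ξ (gpLog c ξ x) = x := by
  unfold gpScale gpLog
  split_ifs with hξ
  · field_simp
  · rw [mul_div_cancel₀ _ hξ, Real.exp_log hx]
    field_simp
    ring

lemma lt_gpScale_iff {c ξ x z : ℝ} (hc : 0 < c) (hx : 0 < 1 + ξ * x / c) :
    x < gpScale c ξ z ↔ gpLog c ξ x < z := by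
  conv_lhs => rw [← gpScale_gpLog hc hx]
  exact (strictMono_gpScale hc ξ).lt_iff_lt

lemma gpLog_nonneg {c ξ x : ℝ} (hc : 0 < c) (hx₀ : 0 ≤ x) (hx : 0 < 1 + ξ * x / c) :
    0 ≤ gpLog c ξ x := by
  rw [← (strictMono_gpScale hc ξ).le_iff_le, gpScale_zero_right, gpScale_gpLog hc hx]
  exact hx₀

@[simp]
lemma gpLog_zero_right (c ξ : ℝ) : gpLog c ξ 0 = 0 := by
  simp [gpLog]

lemma exp_neg_gpLog {c ξ x : ℝ} (hx : 0 < 1 + ξ * x / c) :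
    Real.exp (-gpLog c ξ x) =
      if ξ = 0 then Real.exp (-x / c) else (1 + ξ * x / c) ^ (-1 / ξ) := by
  unfold gpLog
  split_ifs with hξ
  · rw [neg_div]
  · rw [Real.rpow_def_of_pos hx]
    congr 1
    ring

section gpMean

variable {ι : Type*} [Fintype ι]

lemma measurable_gpMean (w : ι → ℝ) (ξ : ℝ) : Measurable (gpMean w ξ) := by
  unfold gpMean
  split_ifs <;> fun_prop

lemma sum_gpScale_add {w : ι → ℝ} (hw : ∀ j, 0 ≤ w j) (hw₀ : 0 < ∑ j, w j) (ξ z : ℝ) (s : ι → ℝ) :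
    ∑ j, gpScale (w j) ξ (z + s j) = gpScale (∑ j, w j) ξ (z + gpMean w ξ s) := by
  unfold gpScale gpMean
  split_ifs with hξ
  · rw [mul_add, mul_div_cancel₀ _ hw₀.ne', Finset.sum_mul, ← Finset.sum_add_distrib]
    simp only [mul_add]
  · have hK : 0 < ∑ j, w j * Real.exp (ξ * s j) := by
      obtain ⟨j, -, hj⟩ := Finset.exists_lt_of_sum_lt
        (by simpa using hw₀ : ∑ _ : ι, (0 : ℝ) < ∑ j, w j)
      exact Finset.sum_pos' (fun j _ => mul_nonneg (hw j) (Real.exp_nonneg _))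
        ⟨j, Finset.mem_univ j, mul_pos hj (Real.exp_pos _)⟩
    rw [mul_add, mul_div_cancel₀ _ hξ, Real.exp_add, Real.exp_log (div_pos hK hw₀),
      ← Finset.sum_div, mul_sub, mul_one, mul_left_comm, mul_div_cancel₀ _ hw₀.ne',
      Finset.mul_sum, ← Finset.sum_sub_distrib]
    congr 1
    refine Finset.sum_congr rfl fun j _ => ?_
    rw [mul_add, Real.exp_add]
    ring

lemma gpMean_nonpos {w : ι → ℝ} (hw : ∀ j, 0 ≤ w j) (hw₀ : 0 < ∑ j, w j) (ξ : ℝ) {s : ι → ℝ}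
    (hs : ∀ j, s j ≤ 0) : gpMean w ξ s ≤ 0 := by
  have h := sum_gpScale_add hw hw₀ ξ 0 s
  simp only [zero_add] at h
  rw [← (strictMono_gpScale hw₀ ξ).le_iff_le, gpScale_zero_right, ← h]
  exact Finset.sum_nonpos fun j _ => gpScale_nonpos (hw j) ξ (hs j)

end gpMean

section Memoryless

variable {Ω : Type*} [MeasurableSpace Ω] {μ : Measure Ω} [IsProbabilityMeasure μ] {E V : Ω → ℝ}

lemma measure_lt_add_of_indepFun (hE : Measurable E) (hV : Measurable V)
    (hEexp : ∀ t : ℝ, 0 ≤ t → μ {ω | t < E ω} = ENNReal.ofReal (Real.exp (-t)))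
    (hindep : IndepFun E V μ) (hVle : ∀ᵐ ω ∂μ, V ω ≤ 0) {t : ℝ} (ht : 0 ≤ t) :
    μ {ω | t < E ω + V ω} =
      ENNReal.ofReal (Real.exp (-t)) * ∫⁻ v, ENNReal.ofReal (Real.exp v) ∂μ.map V := by
  have hA : MeasurableSet {p : ℝ × ℝ | t < p.2 + p.1} :=
    measurableSet_lt measurable_const (measurable_snd.add measurable_fst)
  have hmap : μ.map (fun ω => (V ω, E ω)) = (μ.map V).prod (μ.map E) :=
    (indepFun_iff_map_prod_eq_prod_map_map hV.aemeasurable hE.aemeasurable).1 hindep.symm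
  have hVle' : ∀ᵐ v ∂μ.map V, v ≤ 0 := (ae_map_iff hV.aemeasurable measurableSet_Iic).2 hVle
  calc μ {ω | t < E ω + V ω}
      = μ.map (fun ω => (V ω, E ω)) {p | t < p.2 + p.1} := by
        rw [Measure.map_apply (hV.prodMk hE) hA]; rfl
    _ = ∫⁻ v, μ {ω | t - v < E ω} ∂μ.map V := by
        rw [hmap, Measure.prod_apply hA]
        refine lintegral_congr fun v => ?_
        rw [Measure.map_apply hE (measurable_prodMk_left hA)]
        congr 1; ext ω; simp [sub_lt_iff_lt_add]
    _ = ∫⁻ v, ENNReal.ofReal (Real.exp (-t)) * ENNReal.ofReal (Real.exp v) ∂μ.map V := by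
        refine lintegral_congr_ae ?_
        filter_upwards [hVle'] with v hv
        rw [hEexp _ (by linarith), ← ENNReal.ofReal_mul (Real.exp_nonneg _), ← Real.exp_add]
        ring_nf
    _ = _ := lintegral_const_mul _ (by fun_prop)

lemma measure_pos_add_of_indepFun (hE : Measurable E) (hV : Measurable V)
    (hEexp : ∀ t : ℝ, 0 ≤ t → μ {ω | t < E ω} = ENNReal.ofReal (Real.exp (-t)))
    (hindep : IndepFun E V μ) (hVle : ∀ᵐ ω ∂μ, V ω ≤ 0) :
    0 < μ {ω | 0 < E ω + V ω} := by
  rw [measure_lt_add_of_indepFun hE hV hEexp hindep hVle le_rfl, neg_zero, Real.exp_zero,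
    ENNReal.ofReal_one, one_mul, lintegral_pos_iff_support (by fun_prop)]
  simp [Function.support, Real.exp_pos, Measure.map_eq_zero_iff hV.aemeasurable,
    IsProbabilityMeasure.ne_zero]

lemma cond_lt_add_of_indepFun (hE : Measurable E) (hV : Measurable V)
    (hEexp : ∀ t : ℝ, 0 ≤ t → μ {ω | t < E ω} = ENNReal.ofReal (Real.exp (-t)))
    (hindep : IndepFun E V μ) (hVle : ∀ᵐ ω ∂μ, V ω ≤ 0) {t : ℝ} (ht : 0 ≤ t) :
    μ[{ω | t < E ω + V ω} | {ω | 0 < E ω + V ω}] = ENNReal.ofReal (Real.exp (-t)) := by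
  have hmeas : MeasurableSet {ω | 0 < E ω + V ω} :=
    measurableSet_lt measurable_const (hE.add hV)
  have hsub : {ω | t < E ω + V ω} ⊆ {ω | 0 < E ω + V ω} := fun ω h => ht.trans_lt h
  have hpos := measure_pos_add_of_indepFun hE hV hEexp hindep hVle
  have h₀ := measure_lt_add_of_indepFun hE hV hEexp hindep hVle le_rfl
  rw [neg_zero, Real.exp_zero, ENNReal.ofReal_one, one_mul] at h₀
  rw [cond_apply hmeas, Set.inter_eq_right.2 hsub,
    measure_lt_add_of_indepFun hE hV hEexp hindep hVle ht, ← h₀, mul_left_comm,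
    ENNReal.inv_mul_cancel hpos.ne' (measure_ne_top μ _), mul_one]

end Memoryless

theorem stmt_8_general
    {Ω : Type*} [MeasureSpace Ω] [IsProbabilityMeasure (ℙ : Measure Ω)]
    {D : ℕ}
    (E : Ω → ℝ) (S : Ω → Fin D → ℝ)
    (hEmeas : Measurable E) (hSmeas : Measurable S)
    (hEexp : ∀ t : ℝ, 0 ≤ t → ℙ {ω | t < E ω} = ENNReal.ofReal (Real.exp (-t)))
    (hindep : IndepFun E S ℙ)
    (hSle : ∀ j, ∀ᵐ ω ∂ℙ, S ω j ≤ 0)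
    (σ : Fin D → ℝ) (hσ : ∀ j, 0 < σ j) (ξ : ℝ)
    (Y : Ω → Fin D → ℝ) (hY : ∀ ω j, Y ω j = gpScale (σ j) ξ (E ω + S ω j))
    (a : Fin D → ℝ) (ha : ∀ j, 0 ≤ a j) (ha0 : a ≠ 0)
    (c : ℝ) (hc : c = ∑ j, a j * σ j)
    (W : Ω → ℝ) (hW : ∀ ω, W ω = ∑ j, a j * Y ω j) :
    0 < c
    ∧ 0 < ℙ {ω | 0 < W ω}
    ∧ (∀ x : ℝ, 0 ≤ x → 0 < 1 + ξ * x / c →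
        ℙ[{ω | x < W ω} | {ω | 0 < W ω}]
          = ENNReal.ofReal
              (if ξ = 0 then Real.exp (-x / c) else (1 + ξ * x / c) ^ (-1 / ξ))) := by
  set w : Fin D → ℝ := fun j => a j * σ j
  have hw : ∀ j, 0 ≤ w j := fun j => mul_nonneg (ha j) (hσ j).le
  have hc₀ : 0 < c := by
    obtain ⟨j, hj⟩ := Function.ne_iff.1 ha0
    exact hc ▸ Finset.sum_pos' (fun j _ => hw j)
      ⟨j, Finset.mem_univ j, mul_pos ((ha j).lt_of_ne' hj) (hσ j)⟩
  set V : Ω → ℝ := fun ω => gpMean w ξ (S ω)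
  have hV : Measurable V := (measurable_gpMean w ξ).comp hSmeas
  have hVle : ∀ᵐ ω, V ω ≤ 0 := by
    filter_upwards [ae_all_iff.2 hSle] with ω hω
    exact gpMean_nonpos hw (hc ▸ hc₀) ξ hω
  have hindepV : IndepFun E V := hindep.comp measurable_id (measurable_gpMean w ξ)
  have hWV : ∀ ω, W ω = gpScale c ξ (E ω + V ω) := fun ω => by
    rw [hW, hc]
    simp only [hY, mul_gpScale]
    exact sum_gpScale_add hw (hc ▸ hc₀) ξ (E ω) (S ω)
  have hlt : ∀ x, 0 < 1 + ξ * x / c → {ω | x < W ω} = {ω | gpLog c ξ x < E ω + V ω} := by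
    intro x hx
    ext ω
    simp only [Set.mem_ofPred_eq, hWV, lt_gpScale_iff hc₀ hx]
  have h₀ := hlt 0 (by simp)
  rw [gpLog_zero_right] at h₀
  refine ⟨hc₀, h₀ ▸ measure_pos_add_of_indepFun hEmeas hV hEexp hindepV hVle,
    fun x hx hxc => ?_⟩
  rw [hlt x hxc, h₀, cond_lt_add_of_indepFun hEmeas hV hEexp hindepV hVle
    (gpLog_nonneg hc₀ hx hxc), exp_neg_gpLog hxc]

/-- Nonnegative linear combinations of the components of an MGP vector
with common shape `ξ` and scales `σ` are, conditionally on being positive, univariate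
generalized Pareto with scale `c = a·σ` and shape `ξ`: for `x ≥ 0` with `1 + ξx/c > 0`,
`P(a·Y > x | a·Y > 0) = (1 + ξx/c)^{−1/ξ}` (`= exp (−x/c)` when `ξ = 0`),
independently of the dependence structure `S`. -/
theorem stmt_8
    {Ω : Type*} [MeasureSpace Ω] [IsProbabilityMeasure (ℙ : Measure Ω)]
    {D : ℕ} (hD : 0 < D)
    (E : Ω → ℝ) (S : Ω → Fin D → ℝ)
    (hEmeas : Measurable E) (hSmeas : Measurable S)
    (hEexp : ∀ t : ℝ, 0 ≤ t → ℙ {ω | t < E ω} = ENNReal.ofReal (Real.exp (-t)))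
    (hindep : IndepFun E S ℙ)
    (hSle : ∀ j, ∀ᵐ ω ∂ℙ, S ω j ≤ 0)
    (hSmax : ∀ᵐ ω ∂ℙ, (⨆ j, S ω j) = 0)
    (σ : Fin D → ℝ) (hσ : ∀ j, 0 < σ j) (ξ : ℝ)
    (Y : Ω → Fin D → ℝ) (hY : ∀ ω j, Y ω j = gpScale (σ j) ξ (E ω + S ω j))
    (a : Fin D → ℝ) (ha : ∀ j, 0 ≤ a j) (ha0 : a ≠ 0)
    (c : ℝ) (hc : c = ∑ j, a j * σ j)
    (W : Ω → ℝ) (hW : ∀ ω, W ω = ∑ j, a j * Y ω j) :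
    0 < c
    ∧ 0 < ℙ {ω | 0 < W ω}
    ∧ (∀ x : ℝ, 0 ≤ x → 0 < 1 + ξ * x / c →
        ℙ[{ω | x < W ω} | {ω | 0 < W ω}]
          = ENNReal.ofReal
              (if ξ = 0 then Real.exp (-x / c) else (1 + ξ * x / c) ^ (-1 / ξ))) :=
  stmt_8_general E S hEmeas hSmeas hEexp hindep hSle σ hσ ξ Y hY a ha ha0 c hc W hW
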